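/- Let k be a positive integer and let I ⊆ {1,…,k}. Let G be a (26k+24|I|)-connected graph and let S = {{s_1,t_1},…,{s_k,t_k}} be a set of k pairs of distinct vertices of G. Then some nice partition of G has a parity breaking matching for (S,I) if and only if every nice partition of G has a parity breaking matching for (S,I). -/

import Mathlib

universe u

variable {V : Type u}

/-- A graph is `k`-connected if it has more than `k` vertices and deleting any
set of fewer than `k` vertices leaves a connected graph. -/
def KConnected (G : SimpleGraph V) (k : ℕ) : Prop :=
  k < Nat.card V ∧ ∀ X : Set V, X.ncard < k → (G.induce Xᶜ).Connected

/-- A graph is bipartite if it is 2-colorable. -/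
def Bipartite (G : SimpleGraph V) : Prop := G.Colorable 2

/-- `X` is an odd cycle cover of `G` if `G - X` is bipartite. -/
def IsOddCycleCover (G : SimpleGraph V) (X : Set V) : Prop :=
  Bipartite (G.induce Xᶜ)

/-- `X` is a minimum odd cycle cover of `G`. -/
def IsMinOddCycleCover (G : SimpleGraph V) (X : Set V) : Prop :=
  IsOddCycleCover G X ∧ ∀ Y : Set V, IsOddCycleCover G Y → X.ncard ≤ Y.ncard

/-- The odd cycle cover `X` induces the partition `(A, B)`:
`(A \ X, B \ X)` is a bipartition of `G - X`, and a vertex of `X` lies in `A`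
(resp. `B`) if it has more neighbours in `B \ X` than in `A \ X`
(resp. more neighbours in `A \ X` than in `B \ X`). -/
def InducesPartition (G : SimpleGraph V) (X A B : Set V) : Prop :=
  (∀ u v, G.Adj u v → u ∉ X → v ∉ X → ¬(u ∈ A ∧ v ∈ A) ∧ ¬(u ∈ B ∧ v ∈ B)) ∧
  (∀ x ∈ X,
    ({y | G.Adj x y ∧ y ∈ A \ X}.ncard < {y | G.Adj x y ∧ y ∈ B \ X}.ncard → x ∈ A) ∧
    ({y | G.Adj x y ∧ y ∈ B \ X}.ncard < {y | G.Adj x y ∧ y ∈ A \ X}.ncard → x ∈ B))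

/-- `(A, B)` is a nice partition of `G`. -/
def IsNicePartition (G : SimpleGraph V) (A B : Set V) : Prop :=
  A ∪ B = Set.univ ∧ Disjoint A B ∧
    ∃ X : Set V, IsMinOddCycleCover G X ∧ InducesPartition G X A B

/-- The graph `G_{A,B} = G[A] ∪ G[B]`: edges of `G` with both ends in `A` or both in `B`. -/
def sideGraph (G : SimpleGraph V) (A B : Set V) : SimpleGraph V where
  Adj u v := G.Adj u v ∧ ((u ∈ A ∧ v ∈ A) ∨ (u ∈ B ∧ v ∈ B))
  symm := by
    constructor
    intro u v h
    exact ⟨h.1.symm, by tauto⟩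
  loopless := by
    constructor
    intro v h
    exact G.loopless.irrefl v h.1

/-- A parity breaking matching for `(S, I)` with respect to `(A, B)`, where
`S = {{s i, t i} : i}`: a matching `{m i : i ∈ I}` of edges of `G_{A,B}` such that
`m i` contains no vertex of `{s j, t j}` for `j ≠ i`. -/
def ParityBreakingMatching (G : SimpleGraph V) (A B : Set V) {k : ℕ}
    (s t : Fin k → V) (I : Finset (Fin k)) (m : Fin k → Sym2 V) : Prop :=
  (∀ i ∈ I, m i ∈ (sideGraph G A B).edgeSet) ∧
  (∀ i ∈ I, ∀ j ∈ I, i ≠ j → ∀ x ∈ m i, x ∉ m j) ∧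
  (∀ i ∈ I, ∀ j : Fin k, j ≠ i → s j ∉ m i ∧ t j ∉ m i)

/-- `P` is a family of pairwise vertex-disjoint paths, `P i` connecting `s i` and `t i`. -/
def DisjointPaths {k : ℕ} (G : SimpleGraph V) (s t : Fin k → V)
    (P : ∀ i, G.Walk (s i) (t i)) : Prop :=
  (∀ i, (P i).IsPath) ∧ ∀ i j, i ≠ j → ∀ x ∈ (P i).support, x ∉ (P j).support

/-- `G` is `k`-linked. -/
def KLinked (G : SimpleGraph V) (k : ℕ) : Prop :=
  ∀ s t : Fin k → V, Function.Injective (Sum.elim s t) →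
    ∃ P : ∀ i, G.Walk (s i) (t i), DisjointPaths G s t P

/-- `G` is parity-`k`-linked. -/
def ParityKLinked (G : SimpleGraph V) (k : ℕ) : Prop :=
  ∀ s t : Fin k → V, Function.Injective (Sum.elim s t) →
    ∀ p : Fin k → Bool,
      ∃ P : ∀ i, G.Walk (s i) (t i), DisjointPaths G s t P ∧
        ∀ i, (Odd (P i).length ↔ p i = true)

/-- A set of vertices is independent if no edge joins two of its vertices. -/
def IsIndepSet' (G : SimpleGraph V) (s : Set V) : Prop :=
  ∀ x ∈ s, ∀ y ∈ s, ¬ G.Adj x y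

/-- `G` is parity-`k`-linked restricted to independent sets. -/
def ParityKLinkedIndep (G : SimpleGraph V) (k : ℕ) : Prop :=
  ∀ s t : Fin k → V, Function.Injective (Sum.elim s t) →
    IsIndepSet' G (Set.range s ∪ Set.range t) →
    ∀ p : Fin k → Bool,
      ∃ P : ∀ i, G.Walk (s i) (t i), DisjointPaths G s t P ∧
        ∀ i, (Odd (P i).length ↔ p i = true)

/-- `G` contains `k` pairwise vertex-disjoint odd `S`-cycles. -/
def HasDisjointOddSCycles (G : SimpleGraph V) (S : Set V) (k : ℕ) : Prop :=
  ∃ (v : Fin k → V) (c : ∀ i, G.Walk (v i) (v i)),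
    (∀ i, (c i).IsCycle ∧ Odd (c i).length ∧ ∃ x ∈ S, x ∈ (c i).support) ∧
    ∀ i j, i ≠ j → ∀ x ∈ (c i).support, x ∉ (c j).support

/-- `G` contains an odd `S`-cycle. -/
def HasOddSCycle (G : SimpleGraph V) (S : Set V) : Prop :=
  ∃ (v : V) (c : G.Walk v v), c.IsCycle ∧ Odd c.length ∧ ∃ x ∈ S, x ∈ c.support

/-- `G` contains `k` pairwise vertex-disjoint odd cycles. -/
def HasDisjointOddCycles (G : SimpleGraph V) (k : ℕ) : Prop :=
  ∃ (v : Fin k → V) (c : ∀ i, G.Walk (v i) (v i)),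
    (∀ i, (c i).IsCycle ∧ Odd (c i).length) ∧
    ∀ i j, i ≠ j → ∀ x ∈ (c i).support, x ∉ (c j).support

/-- `C` is a vertex cover of `G`. -/
def IsVertexCover (G : SimpleGraph V) (C : Set V) : Prop :=
  ∀ e ∈ G.edgeSet, ∃ v ∈ C, v ∈ e

/-- The vertex cover number `τ(G)`. -/
noncomputable def vcNumber (G : SimpleGraph V) : ℕ :=
  sInf {n | ∃ C : Set V, IsVertexCover G C ∧ C.ncard = n}

/-- `P` is an odd `Z`-path: a path of odd length whose vertex set meets `Z`
exactly in its two end vertices. -/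
def IsOddZPath (G : SimpleGraph V) (Z : Set V) {u v : V} (P : G.Walk u v) : Prop :=
  P.IsPath ∧ Odd P.length ∧ u ∈ Z ∧ v ∈ Z ∧
    ∀ x ∈ P.support, x ∈ Z → x = u ∨ x = v

/-!
Let `(A, B)` and `(A', B')` be nice partitions coming from minimum odd cycle covers `X` and `X'`.
If `|X'| > 2k + 2|I|`, then no `2k + 2|I|` vertices cover the edges of `G_{A',B'}` (they would
form a smaller odd cycle cover), so a parity breaking matching of `G_{A',B'}` avoiding all
terminals is found greedily. Otherwise `|X ∪ X'| ≤ 4k + 4|I|` does not disconnect `G`, so the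
bipartitions of the connected graph `G - (X ∪ X')` induced by the two partitions agree up to
swapping sides. An edge of a parity breaking matching for `(A, B)` that is not an edge of
`G_{A',B'}` then has an endpoint `w` that changed sides. Since a vertex of `X` lies on the side
where it has fewer neighbours, at least half of the neighbours of `w` outside `X` lie on its old
opposite side, which is its new side up to `X'`; as `G` has large minimum degree, the edge can be
replaced by an edge from `w` to a fresh neighbour.
-/

open Finset

lemma exists_pairwiseDisjoint_of_forall_exists_disjoint {ι α β : Type*} [DecidableEq α]
    [Nonempty β] (φ : β → Finset α) {r : ℕ} (hr : 0 < r) (hφ : ∀ b, #(φ b) ≤ r)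
    (P : ι → Set β) (S : Finset ι)
    (hP : ∀ i ∈ S, ∀ F : Finset α, #F < r * #S → ∃ b ∈ P i, Disjoint (φ b) F) :
    ∃ f : ι → β, (∀ i ∈ S, f i ∈ P i) ∧ (S : Set ι).PairwiseDisjoint (φ ∘ f) := by
  classical
  induction S using Finset.induction_on with
  | empty => exact ⟨fun _ => Classical.arbitrary β, by simp, by simp⟩
  | @insert a S ha ih =>
    have hS : r * #S < r * #(insert a S) := by
      rw [card_insert_of_notMem ha]; exact Nat.mul_lt_mul_of_pos_left (Nat.lt_succ_self _) hr
    obtain ⟨f, hfP, hfS⟩ := ih fun i hi F hF => hP i (mem_insert_of_mem hi) F (hF.trans hS)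
    have hF : #(S.biUnion (φ ∘ f)) < r * #(insert a S) :=
      ((card_biUnion_le_card_mul S _ r fun i _ => hφ (f i)).trans_eq (mul_comm _ _)).trans_lt hS
    obtain ⟨b, hbP, hb⟩ := hP a (mem_insert_self a S) _ hF
    have hfa : ∀ i ∈ S, Function.update f a b i = f i := fun i hi =>
      Function.update_of_ne (ne_of_mem_of_not_mem hi ha) b f
    refine ⟨Function.update f a b, fun i hi => ?_, ?_⟩
    · rcases mem_insert.mp hi with rfl | hi
      · simpa
      · simpa [hfa i hi] using hfP i hi
    · rw [coe_insert, Set.pairwiseDisjoint_insert]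
      refine ⟨fun i hi j hj hij => ?_, fun j hj _ => ?_⟩
      · simpa [Function.onFun, hfa i hi, hfa j hj] using hfS hi hj hij
      · simpa [Function.onFun, hfa j hj] using (disjoint_biUnion_right _ _ _).mp hb j hj

lemma exists_injOn_forall_mem_of_card_le_ncard {ι α : Type*} [Nonempty α] (S : Finset ι)
    (Z : ι → Set α) (hZ : ∀ i ∈ S, #S ≤ (Z i).ncard) :
    ∃ z : ι → α, Set.InjOn z S ∧ ∀ i ∈ S, z i ∈ Z i := by
  classical
  obtain ⟨z, hz, hzS⟩ := exists_pairwiseDisjoint_of_forall_exists_disjoint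
    (fun x => ({x} : Finset α)) one_pos (fun _ => (card_singleton _).le) Z S fun i hi F hF => by
      obtain ⟨y, hy, hyF⟩ := Set.exists_mem_notMem_of_ncard_lt_ncard (s := (F : Set α)) (t := Z i)
        (by rw [Set.ncard_coe_finset]; have := hZ i hi; omega)
      exact ⟨y, hy, disjoint_singleton_left.mpr hyF⟩
  exact ⟨z, fun i hi j hj hzij => by_contra fun hij =>
    disjoint_singleton.mp (hzS hi hj hij) hzij, hz⟩

lemma Sym2.card_toFinset_le_two {α : Type*} [DecidableEq α] (e : Sym2 α) : #e.toFinset ≤ 2 := by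
  rw [Sym2.card_toFinset]; split_ifs <;> omega

lemma IsCompl.notMem_left_iff {α : Type*} {A B : Set α} (h : IsCompl A B) {v : α} :
    v ∉ A ↔ v ∈ B := by
  rw [← h.compl_eq]; rfl

lemma SimpleGraph.Connected.forall_iff_or_forall_iff_not {W : Type*} {H : SimpleGraph W}
    (hH : H.Connected) {p q : W → Prop} (hp : ∀ ⦃u v⦄, H.Adj u v → (p u ↔ ¬ p v))
    (hq : ∀ ⦃u v⦄, H.Adj u v → (q u ↔ ¬ q v)) :
    (∀ v, p v ↔ q v) ∨ (∀ v, p v ↔ ¬ q v) := by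
  have key : ∀ u v, H.Reachable u v → ((p u ↔ q u) ↔ (p v ↔ q v)) := by
    rintro u v ⟨w⟩
    induction w with
    | nil => rfl
    | cons huv _ ih => rw [← ih]; have := hp huv; have := hq huv; tauto
  obtain ⟨v₀⟩ := hH.nonempty
  by_cases h₀ : p v₀ ↔ q v₀
  · exact Or.inl fun v => (key v₀ v (hH v₀ v)).mp h₀
  · exact Or.inr fun v => by have := key v₀ v (hH v₀ v); tauto

section Partitions

variable {G : SimpleGraph V} {A B A' B' X X' : Set V}

lemma KConnected.le_ncard_neighborSet [Finite V] {d : ℕ} (h : KConnected G d) (v : V) :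
    d ≤ (G.neighborSet v).ncard := by
  by_contra! hlt
  have hcompl : 1 < (G.neighborSet v)ᶜ.ncard := by
    have := Set.ncard_add_ncard_compl (G.neighborSet v); have := h.1; omega
  obtain ⟨u, hu, huv⟩ := Set.exists_ne_of_one_lt_ncard hcompl v
  obtain ⟨⟨x, hx⟩, hvx⟩ := ((h.2 _ hlt).preconnected ⟨v, G.notMem_neighborSet_self⟩
    ⟨u, hu⟩).nonempty_neighborSet_left (by simpa using huv.symm)
  exact hx hvx

lemma IsVertexCover.isOddCycleCover {C : Set V} (hC : IsVertexCover (sideGraph G A B) C)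
    (hAB : A ∪ B = Set.univ) : IsOddCycleCover G C := by
  classical
  refine ⟨SimpleGraph.Coloring.mk (fun v => if v.1 ∈ A then 0 else 1) fun {u v} huv heq => ?_⟩
  have hside : (u.1 ∈ A ∧ v.1 ∈ A) ∨ (u.1 ∈ B ∧ v.1 ∈ B) := by
    have hu : u.1 ∈ A ∪ B := hAB ▸ Set.mem_univ _
    have hv : v.1 ∈ A ∪ B := hAB ▸ Set.mem_univ _
    by_cases huA : u.1 ∈ A <;> by_cases hvA : v.1 ∈ A
    · exact Or.inl ⟨huA, hvA⟩
    · simp [huA, hvA] at heq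
    · simp [huA, hvA] at heq
    · exact Or.inr ⟨hu.resolve_left huA, hv.resolve_left hvA⟩
  obtain ⟨x, hxC, hx⟩ := hC s(u.1, v.1) ⟨huv, hside⟩
  rcases Sym2.mem_iff.mp hx with rfl | rfl
  exacts [u.2 hxC, v.2 hxC]

variable (G) in
lemma exists_isMinOddCycleCover [Finite V] :
    ∃ X, IsMinOddCycleCover G X := by
  have huniv : IsOddCycleCover G Set.univ := by
    have : IsEmpty ↥((Set.univ : Set V)ᶜ) := ⟨fun v => v.2 trivial⟩
    exact SimpleGraph.Colorable.of_isEmpty 2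
  obtain ⟨X, hX, hmin⟩ := Set.exists_min_image {X | IsOddCycleCover G X} Set.ncard
    (Set.toFinite _) ⟨_, huniv⟩
  exact ⟨X, hX, hmin⟩

lemma IsOddCycleCover.exists_inducesPartition (hX : IsOddCycleCover G X) :
    ∃ A B, IsCompl A B ∧ InducesPartition G X A B := by
  classical
  obtain ⟨c⟩ := hX
  set P : Set V := {v | ∃ h : v ∉ X, c ⟨v, h⟩ = 1}
  have hP : ∀ u v, G.Adj u v → u ∉ X → v ∉ X → (u ∈ P ↔ v ∉ P) := by
    intro u v huv hu hv
    have hc := c.valid (show (G.induce Xᶜ).Adj ⟨u, hu⟩ ⟨v, hv⟩ from huv)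
    have key : ∀ a b : Fin 2, a ≠ b → (a = 1 ↔ ¬ b = 1) := by decide
    simpa [P, hu, hv] using key _ _ hc
  set B : Set V := P \ X ∪ {x ∈ X |
    {y | G.Adj x y ∧ y ∈ P \ X}.ncard < {y | G.Adj x y ∧ y ∈ Pᶜ \ X}.ncard}
  have hB : ∀ v ∉ X, v ∈ B ↔ v ∈ P := fun v hv => by simp [B, hv]
  have hBX : B \ X = P \ X := by ext v; by_cases hv : v ∈ X <;> simp [hv, hB]
  have hBcX : Bᶜ \ X = Pᶜ \ X := by ext v; by_cases hv : v ∈ X <;> simp [hv, hB]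
  refine ⟨Bᶜ, B, isCompl_compl.symm, fun u v huv hu hv => ?_, fun x hx => ?_⟩
  · have := hP u v huv hu hv
    simp only [Set.mem_compl_iff, hB u hu, hB v hv]
    tauto
  · rw [hBX, hBcX]
    have hxB : x ∈ B ↔ {y | G.Adj x y ∧ y ∈ P \ X}.ncard <
        {y | G.Adj x y ∧ y ∈ Pᶜ \ X}.ncard := by simp [B, hx]
    rw [Set.mem_compl_iff, hxB]
    omega

variable (G) in
lemma exists_isNicePartition [Finite V] : ∃ A B, IsNicePartition G A B := by
  obtain ⟨X, hX⟩ := exists_isMinOddCycleCover G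
  obtain ⟨A, B, hAB, hip⟩ := hX.1.exists_inducesPartition
  exact ⟨A, B, codisjoint_iff.mp hAB.codisjoint, hAB.disjoint, X, hX, hip⟩

lemma IsNicePartition.isCompl (h : IsNicePartition G A B) : IsCompl A B :=
  ⟨h.2.1, codisjoint_iff.mpr h.1⟩

lemma sideGraph_comm (A B : Set V) : sideGraph G A B = sideGraph G B A := by
  ext u v
  exact and_congr_right' or_comm

lemma ParityBreakingMatching.symm {k : ℕ} {s t : Fin k → V} {I : Finset (Fin k)}
    {m : Fin k → Sym2 V} (h : ParityBreakingMatching G A B s t I m) :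
    ParityBreakingMatching G B A s t I m := by
  rwa [ParityBreakingMatching, sideGraph_comm]

lemma InducesPartition.symm (h : InducesPartition G X A B) : InducesPartition G X B A :=
  ⟨fun u v huv hu hv => (h.1 u v huv hu hv).symm, fun x hx => (h.2 x hx).symm⟩

lemma InducesPartition.mem_iff_notMem (h : InducesPartition G X A B) (hAB : IsCompl A B)
    {u v : V} (huv : G.Adj u v) (hu : u ∉ X) (hv : v ∉ X) : u ∈ A ↔ v ∉ A := by
  have := h.1 u v huv hu hv
  rw [← hAB.notMem_left_iff, ← hAB.notMem_left_iff] at this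
  tauto

lemma InducesPartition.agree_or_agree_swap (h : InducesPartition G X A B) (hAB : IsCompl A B)
    (h' : InducesPartition G X' A' B') (hA'B' : IsCompl A' B')
    (hconn : (G.induce (X ∪ X')ᶜ).Connected) :
    (∀ v ∉ X ∪ X', v ∈ A ↔ v ∈ A') ∨ (∀ v ∉ X ∪ X', v ∈ A ↔ v ∈ B') := by
  have hXX' : ∀ {v}, v ∉ X ∪ X' → v ∉ X ∧ v ∉ X' := fun hv => by simpa using hv
  rcases hconn.forall_iff_or_forall_iff_not (p := fun v => v.1 ∈ A) (q := fun v => v.1 ∈ A')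
    (fun u v huv => h.mem_iff_notMem hAB huv (hXX' u.2).1 (hXX' v.2).1)
    (fun u v huv => h'.mem_iff_notMem hA'B' huv (hXX' u.2).2 (hXX' v.2).2) with hal | hal
  · exact Or.inl fun v hv => hal ⟨v, hv⟩
  · exact Or.inr fun v hv => (hal ⟨v, hv⟩).trans hA'B'.notMem_left_iff

lemma InducesPartition.ncard_inter_le (h : InducesPartition G X A B) (hAB : Disjoint A B)
    {w : V} (hw : w ∈ A) :
    (G.neighborSet w ∩ (A \ X)).ncard ≤ (G.neighborSet w ∩ (B \ X)).ncard := by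
  by_cases hwX : w ∈ X
  · by_contra! hlt
    exact Set.disjoint_left.mp hAB hw ((h.2 w hwX).2 hlt)
  · have : G.neighborSet w ∩ (A \ X) = ∅ := Set.eq_empty_of_forall_notMem
      fun z ⟨hz, hzA, hzX⟩ => (h.1 w z hz hwX hzX).1 ⟨hw, hzA⟩
    simp [this]

lemma InducesPartition.ncard_neighborSet_le [Finite V] (h : InducesPartition G X A B)
    (hAB : IsCompl A B) (hBB' : B \ (X ∪ X') ⊆ B') {w : V} (hw : w ∈ A) :
    (G.neighborSet w).ncard ≤ 2 * (G.neighborSet w ∩ B').ncard + 2 * X'.ncard + X.ncard := by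
  have := h.ncard_inter_le hAB.disjoint hw
  set N := G.neighborSet w
  have hN : N ⊆ N ∩ (A \ X) ∪ N ∩ (B \ X) ∪ X := fun z hz => by
    by_cases hzX : z ∈ X
    · exact Or.inr hzX
    by_cases hzA : z ∈ A
    · exact Or.inl (Or.inl ⟨hz, hzA, hzX⟩)
    · exact Or.inl (Or.inr ⟨hz, hAB.notMem_left_iff.mp hzA, hzX⟩)
  have hNB : N ∩ (B \ X) ⊆ N ∩ B' ∪ X' := fun z ⟨hz, hzB, hzX⟩ => by
    by_cases hzX' : z ∈ X'
    · exact Or.inr hzX'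
    · exact Or.inl ⟨hz, hBB' ⟨hzB, by simp [hzX, hzX']⟩⟩
  have := (Set.ncard_le_ncard hN).trans
    ((Set.ncard_union_le _ _).trans (add_le_add_left (Set.ncard_union_le _ _) _))
  have := (Set.ncard_le_ncard hNB).trans (Set.ncard_union_le _ _)
  omega

lemma exists_mem_ncard_neighborSet_le [Finite V] (hAB : IsCompl A B) (hA'B' : IsCompl A' B')
    (h : InducesPartition G X A B) (halign : ∀ v ∉ X ∪ X', v ∈ A ↔ v ∈ A') {e : Sym2 V}
    (he : e ∈ (sideGraph G A B).edgeSet) (he' : e ∉ (sideGraph G A' B').edgeSet) :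
    ∃ w ∈ e, (G.neighborSet w).ncard ≤
      2 * ((sideGraph G A' B').neighborSet w).ncard + 2 * X'.ncard + X.ncard := by
  have hflip : ∀ w, ¬(w ∈ A ↔ w ∈ A') → (G.neighborSet w).ncard ≤
      2 * ((sideGraph G A' B').neighborSet w).ncard + 2 * X'.ncard + X.ncard := by
    intro w hw
    by_cases hwA : w ∈ A
    · have hBB' : B \ (X ∪ X') ⊆ B' := fun v ⟨hvB, hv⟩ => hA'B'.notMem_left_iff.mp
        fun hvA' => hAB.notMem_left_iff.mpr hvB ((halign v hv).mpr hvA')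
      have hwB' : w ∈ B' := hA'B'.notMem_left_iff.mp (by tauto)
      have : (G.neighborSet w ∩ B').ncard ≤ ((sideGraph G A' B').neighborSet w).ncard :=
        Set.ncard_le_ncard fun z ⟨hz, hzB'⟩ => ⟨hz, Or.inr ⟨hwB', hzB'⟩⟩
      have := h.ncard_neighborSet_le hAB hBB' hwA
      omega
    · have hAA' : A \ (X ∪ X') ⊆ A' := fun v ⟨hvA, hv⟩ => (halign v hv).mp hvA
      have hwA' : w ∈ A' := by tauto
      have : (G.neighborSet w ∩ A').ncard ≤ ((sideGraph G A' B').neighborSet w).ncard :=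
        Set.ncard_le_ncard fun z ⟨hz, hzA'⟩ => ⟨hz, Or.inl ⟨hwA', hzA'⟩⟩
      have := h.symm.ncard_neighborSet_le hAB.symm hAA' (hAB.notMem_left_iff.mp hwA)
      omega
  induction e using Sym2.ind with | h u v => ?_
  -- the edge leaves `G_{A',B'}` because one of its ends changed sides
  obtain ⟨huv, hside⟩ := he
  have hside' : ¬(u ∈ A' ∧ v ∈ A' ∨ u ∈ B' ∧ v ∈ B') := fun hs => he' ⟨huv, hs⟩
  simp only [← hAB.notMem_left_iff, ← hA'B'.notMem_left_iff] at hside hside'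
  by_cases hu : u ∈ A ↔ u ∈ A'
  · exact ⟨v, Sym2.mem_mk_right u v, hflip v (by tauto)⟩
  · exact ⟨u, Sym2.mem_mk_left u v, hflip u hu⟩

variable {k : ℕ}

lemma exists_parityBreakingMatching_of_forall_isVertexCover [Finite V] [Nonempty V]
    (s t : Fin k → V) (I : Finset (Fin k))
    (hcover : ∀ C, IsVertexCover (sideGraph G A B) C → 2 * k + 2 * #I < C.ncard) :
    ∃ m, ParityBreakingMatching G A B s t I m := by
  classical
  set T := univ.image (Sum.elim s t)
  have hT : #T ≤ 2 * k := card_image_le.trans (by simp [two_mul])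
  have : Nonempty (Sym2 V) := .map Sym2.diag ‹_›
  obtain ⟨m, hmP, hmI⟩ := exists_pairwiseDisjoint_of_forall_exists_disjoint Sym2.toFinset two_pos
    Sym2.card_toFinset_le_two (fun _ => {e ∈ (sideGraph G A B).edgeSet | ∀ x ∈ e, x ∉ T}) I
    fun i _ F hF => by
      by_contra! hF'
      have hcov : IsVertexCover (sideGraph G A B) ↑(T ∪ F) := fun e he => by
        by_contra! he'
        refine hF' e ⟨he, fun x hx hxT => he' x (mem_union_left _ hxT) hx⟩ ?_
        exact disjoint_left.mpr fun x hx hxF =>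
          he' x (mem_union_right _ hxF) (Sym2.mem_toFinset.mp hx)
      have := hcover _ hcov
      rw [Set.ncard_coe_finset] at this
      have := card_union_le T F
      omega
  refine ⟨m, fun i hi => (hmP i hi).1, fun i hi j hj hij x hxi hxj => ?_, fun i hi j _ => ?_⟩
  · exact disjoint_left.mp (hmI hi hj hij) (Sym2.mem_toFinset.mpr hxi) (Sym2.mem_toFinset.mpr hxj)
  · exact ⟨fun h => (hmP i hi).2 _ h (mem_image_of_mem _ (mem_univ (Sum.inl j))),
      fun h => (hmP i hi).2 _ h (mem_image_of_mem _ (mem_univ (Sum.inr j)))⟩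

lemma ParityBreakingMatching.of_mem_or_eq_fresh {s t : Fin k → V} {I J : Finset (Fin k)}
    {m m' : Fin k → Sym2 V} {z : Fin k → V} (hm : ParityBreakingMatching G A B s t I m)
    (hedge : ∀ i ∈ I, m' i ∈ (sideGraph G A' B').edgeSet)
    (hm' : ∀ i x, x ∈ m' i → x ∈ m i ∨ i ∈ J ∧ x = z i) (hz : Set.InjOn z J)
    (hzm : ∀ i ∈ J, ∀ j ∈ I, z i ∉ m j) (hzst : ∀ i ∈ J, ∀ j, z i ≠ s j ∧ z i ≠ t j) :
    ParityBreakingMatching G A' B' s t I m' := by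
  refine ⟨hedge, fun i hi j hj hij x hxi hxj => ?_, fun i hi j hji => ?_⟩
  · rcases hm' i x hxi with hx | ⟨hiJ, rfl⟩ <;> rcases hm' j _ hxj with hx' | ⟨hjJ, hx'⟩
    · exact hm.2.1 i hi j hj hij x hx hx'
    · exact hzm j hjJ i hi (hx' ▸ hx)
    · exact hzm i hiJ j hj hx'
    · exact hij (hz hiJ hjJ hx')
  · constructor <;> intro hx <;> rcases hm' i _ hx with hx | ⟨hiJ, hx⟩
    · exact (hm.2.2 i hi j hji).1 hx
    · exact (hzst i hiJ j).1 hx.symm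
    · exact (hm.2.2 i hi j hji).2 hx
    · exact (hzst i hiJ j).2 hx.symm

lemma ParityBreakingMatching.exists_of_le_ncard_neighborSet [Finite V] [Nonempty V]
    {s t : Fin k → V} {I : Finset (Fin k)} {m : Fin k → Sym2 V}
    (hm : ParityBreakingMatching G A B s t I m)
    (hrepair : ∀ i ∈ I, m i ∉ (sideGraph G A' B').edgeSet →
      ∃ w ∈ m i, 2 * k + 3 * #I ≤ ((sideGraph G A' B').neighborSet w).ncard) :
    ∃ m', ParityBreakingMatching G A' B' s t I m' := by
  classical
  set H := sideGraph G A' B'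
  choose! w hwm hw using hrepair
  set T := univ.image (Sum.elim s t) ∪ I.biUnion fun j => (m j).toFinset
  have hT : #T ≤ 2 * k + 2 * #I := by
    refine (card_union_le _ _).trans (add_le_add (card_image_le.trans (by simp [two_mul])) ?_)
    exact (card_biUnion_le_card_mul _ _ 2 fun j _ => Sym2.card_toFinset_le_two _).trans_eq
      (mul_comm _ _)
  set J := I.filter fun i => m i ∉ H.edgeSet
  have hJ : #J ≤ #I := card_filter_le _ _
  obtain ⟨z, hzJ, hz⟩ := exists_injOn_forall_mem_of_card_le_ncard J
    (fun i => H.neighborSet (w i) \ T) fun i hi => by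
      obtain ⟨hiI, hbad⟩ := mem_filter.mp hi
      have := Set.le_ncard_sdiff (↑T) (H.neighborSet (w i))
      rw [Set.ncard_coe_finset] at this
      have := hw i hiI hbad
      omega
  have hzT : ∀ i ∈ J, z i ∉ T := fun i hi => (hz i hi).2
  refine ⟨fun i => if i ∈ J then s(w i, z i) else m i, hm.of_mem_or_eq_fresh (fun i hi => ?_)
    (fun i x hx => ?_) hzJ
    (fun i hi j hj hzj => hzT i hi (mem_union_right _ (mem_biUnion.mpr
      ⟨j, hj, Sym2.mem_toFinset.mpr hzj⟩)))
    (fun i hi j => ⟨fun h => hzT i hi (mem_union_left _ (h ▸ mem_image_of_mem _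
      (mem_univ (Sum.inl j)))), fun h => hzT i hi (mem_union_left _ (h ▸ mem_image_of_mem _
      (mem_univ (Sum.inr j))))⟩)⟩
  · by_cases hiJ : i ∈ J
    · simpa [hiJ] using (hz i hiJ).1
    · simp only [hiJ, if_false]
      simpa [J, hi] using hiJ
  · by_cases hi : i ∈ J
    · obtain ⟨hiI, hbad⟩ := mem_filter.mp hi
      simp only [hi, if_true, Sym2.mem_iff] at hx
      rcases hx with rfl | rfl
      exacts [Or.inl (hwm i hiI hbad), Or.inr ⟨hi, rfl⟩]
    · simp only [hi, if_false] at hx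
      exact Or.inl hx

lemma exists_parityBreakingMatching_of_agree [Finite V] [Nonempty V] {s t : Fin k → V}
    {I : Finset (Fin k)} {m : Fin k → Sym2 V} (hAB : IsCompl A B) (hA'B' : IsCompl A' B')
    (h : InducesPartition G X A B) (halign : ∀ v ∉ X ∪ X', v ∈ A ↔ v ∈ A')
    (hdeg : ∀ v, 2 * (2 * k + 3 * #I) + 2 * X'.ncard + X.ncard ≤ (G.neighborSet v).ncard)
    (hm : ParityBreakingMatching G A B s t I m) :
    ∃ m', ParityBreakingMatching G A' B' s t I m' :=
  hm.exists_of_le_ncard_neighborSet fun i hi hbad => by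
    obtain ⟨w, hw, hle⟩ := exists_mem_ncard_neighborSet_le hAB hA'B' h halign (hm.1 i hi) hbad
    exact ⟨w, hw, by have := hdeg w; omega⟩

end Partitions

theorem stmt4_general {V : Type u} [Fintype V] (k : ℕ) (hk : 0 < k) (I : Finset (Fin k))
    (G : SimpleGraph V) (hconn : KConnected G (26 * k + 24 * I.card))
    (s t : Fin k → V) :
    (∃ A B : Set V, IsNicePartition G A B ∧
        ∃ m : Fin k → Sym2 V, ParityBreakingMatching G A B s t I m) ↔
      (∀ A B : Set V, IsNicePartition G A B →
        ∃ m : Fin k → Sym2 V, ParityBreakingMatching G A B s t I m) := by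
  have : Nonempty V := (Nat.card_pos_iff.mp (Nat.zero_lt_of_lt hconn.1)).1
  refine ⟨?_, fun h => ?_⟩
  · rintro ⟨A, B, hnice, m, hm⟩ A' B' hnice'
    obtain ⟨X, hX, hip⟩ := hnice.2.2
    obtain ⟨X', hX', hip'⟩ := hnice'.2.2
    by_cases hlarge : 2 * k + 2 * #I < X'.ncard
    · exact exists_parityBreakingMatching_of_forall_isVertexCover s t I fun C hC =>
        hlarge.trans_le (hX'.2 C (hC.isOddCycleCover hnice'.1))
    have hXX' := hX.2 X' hX'.1
    have hdeg : ∀ v, 2 * (2 * k + 3 * #I) + 2 * X'.ncard + X.ncard ≤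
        (G.neighborSet v).ncard := fun v => by
      have := hconn.le_ncard_neighborSet v; omega
    have hsep : (G.induce (X ∪ X')ᶜ).Connected :=
      hconn.2 _ (by have := Set.ncard_union_le X X'; omega)
    rcases hip.agree_or_agree_swap hnice.isCompl hip' hnice'.isCompl hsep with halign | halign
    · exact exists_parityBreakingMatching_of_agree hnice.isCompl hnice'.isCompl hip halign hdeg hm
    · obtain ⟨m', hm'⟩ := exists_parityBreakingMatching_of_agree hnice.isCompl
        hnice'.isCompl.symm hip halign hdeg hm
      exact ⟨m', hm'.symm⟩
  · obtain ⟨A, B, hAB⟩ := exists_isNicePartition G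
    exact ⟨A, B, hAB, h A B hAB⟩

theorem stmt4 {V : Type u} [Fintype V] (k : ℕ) (hk : 0 < k) (I : Finset (Fin k))
    (G : SimpleGraph V) (hconn : KConnected G (26 * k + 24 * I.card))
    (s t : Fin k → V) (hst : Function.Injective (Sum.elim s t)) :
    (∃ A B : Set V, IsNicePartition G A B ∧
        ∃ m : Fin k → Sym2 V, ParityBreakingMatching G A B s t I m) ↔
      (∀ A B : Set V, IsNicePartition G A B →
        ∃ m : Fin k → Sym2 V, ParityBreakingMatching G A B s t I m) :=
  stmt4_general k hk I G hconn s t
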